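/- Assume each ν_x has no atoms and the law of p₀(X) has no atoms, and let (X₁,Y₁), (X₂,Y₂), … be i.i.d. with joint law μ_X ⊗ κ. Then for every bounded continuous function f : ℝ → ℝ, almost surely (1/n)·Σ_{i=1}^n f(H(F(Y_i|X_i))) → ∫₀¹ f(u) du as n → ∞; i.e., the empirical distribution of the model errors H(F(Y_i|X_i)) converges weakly to the uniform distribution on [0,1] almost surely. -/

import Mathlib

/-!
Write `U = F(Y | X)`. Given `X = x`, the CDF of `κ x` jumps from `0` to `p₀ x` at the origin
and then follows `p₀ x + (1 - p₀ x) · F_{ν_x}`, a continuous CDF; so `U` has no mass strictly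
between `0` and `p₀ x` and is uniform above it: `P(U ≤ s | X = x) = s · 1[p₀ x ≤ s]` for
`s < 1`. Integrating in `x` gives `P(U ≤ s) = s · P(p₀(X) ≤ s) = H(s)`, so `H` is the CDF
of `U` on `[0, 1]`. It is continuous because `p₀(X)` has no atoms, hence `H(U)` is uniform on
`[0, 1]` (probability integral transform), and the strong law of large numbers applied to the
i.i.d. variables `f(H(U_i))` gives the claim.
-/

open MeasureTheory ProbabilityTheory Set Filter
open scoped Topology

namespace ProbabilityTheory

section CDF

variable {μ : Measure ℝ} [IsProbabilityMeasure μ]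

theorem continuous_cdf [NullSingletonClass μ] : Continuous (cdf μ) := by
  refine continuous_iff_continuousAt.2 fun x => ?_
  have hleft : Function.leftLim (cdf μ) x = cdf μ x := by
    have h := (cdf μ).measure_singleton x
    rw [measure_cdf, measure_singleton, eq_comm, ENNReal.ofReal_eq_zero, sub_nonpos] at h
    exact le_antisymm ((monotone_cdf μ).leftLim_le le_rfl) h
  rw [(monotone_cdf μ).continuousAt_iff_leftLim_eq_rightLim, hleft, (cdf μ).rightLim_eq]

theorem measure_setOf_cdf_le (hμ : Continuous (cdf μ)) {t : ℝ} (ht : t < 1) :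
    μ {y | cdf μ y ≤ t} = ENNReal.ofReal t := by
  set S := {y | cdf μ y ≤ t}
  obtain ⟨a, ha⟩ := ((tendsto_cdf_atTop μ).eventually (lt_mem_nhds ht)).exists_forall_of_atTop
  have hbdd : BddAbove S := ⟨a, fun y hy => not_lt.1 fun hay => (ha y hay.le).not_ge hy⟩
  rcases S.eq_empty_or_nonempty with hS | hS
  · have ht0 : t ≤ 0 := by
      by_contra! ht0
      obtain ⟨y, hy⟩ := ((tendsto_cdf_atBot μ).eventually (gt_mem_nhds ht0)).exists
      exact hS.subset (show y ∈ S from hy.le)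
    rw [hS, measure_empty, ENNReal.ofReal_of_nonpos ht0]
  · have hb : sSup S ∈ S := (isClosed_le hμ continuous_const).csSup_mem hS hbdd
    have hSIic : S = Iic (sSup S) :=
      Subset.antisymm (fun y hy => le_csSup hbdd hy) fun y hy => (monotone_cdf μ hy).trans hb
    have hcdf : cdf μ (sSup S) = t := by
      refine le_antisymm hb (ge_of_tendsto
        (hμ.continuousAt.tendsto.mono_left (nhdsWithin_le_nhds (s := Ioi (sSup S))))
        (eventually_nhdsWithin_of_forall fun y hy => ?_))
      exact (not_le.1 fun h => (not_le.2 hy) (le_csSup hbdd h)).le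
    rw [hSIic, ← ofReal_cdf, hcdf]

theorem map_cdf_eq_restrict_Icc (hμ : Continuous (cdf μ)) :
    μ.map (cdf μ) = volume.restrict (Icc 0 1) := by
  have hmeas : Measurable (cdf μ) := (monotone_cdf μ).measurable
  refine Measure.ext_of_Iic _ _ fun t => ?_
  rw [Measure.map_apply hmeas measurableSet_Iic, Measure.restrict_apply measurableSet_Iic]
  have hvol : volume (Iic t ∩ Icc (0 : ℝ) 1) = ENNReal.ofReal (min t 1) := by
    have hinter : Iic t ∩ Icc (0 : ℝ) 1 = Icc 0 (min t 1) := by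
      ext y
      simp only [mem_inter_iff, mem_Iic, mem_Icc, le_min_iff]
      tauto
    rw [hinter, Real.volume_Icc, sub_zero]
  rw [hvol]
  rcases lt_or_ge t 1 with ht | ht
  · rw [min_eq_left ht.le, ← measure_setOf_cdf_le hμ ht]
    rfl
  · rw [min_eq_right ht, ENNReal.ofReal_one, ← measure_univ (μ := μ)]
    exact congrArg μ (eq_univ_of_forall fun y => (cdf_le_one μ y).trans ht)

end CDF

theorem cdf_zero_inflated {ν m : Measure ℝ} [IsProbabilityMeasure ν] [IsProbabilityMeasure m]
    {p : ℝ} (hp : p ∈ Icc 0 1)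
    (hm : m = ENNReal.ofReal p • Measure.dirac 0 + ENNReal.ofReal (1 - p) • ν) (y : ℝ) :
    cdf m y = (if 0 ≤ y then p else 0) + (1 - p) * cdf ν y := by
  rw [cdf_eq_real, cdf_eq_real, hm, measureReal_def, measureReal_def]
  simp only [Measure.coe_add, Measure.coe_smul, Pi.add_apply, Pi.smul_apply, smul_eq_mul]
  split_ifs with hy
  · rw [Measure.dirac_apply_of_mem (mem_Iic.2 hy), mul_one,
      ENNReal.toReal_add ENNReal.ofReal_ne_top (by finiteness), ENNReal.toReal_mul,
      ENNReal.toReal_ofReal hp.1, ENNReal.toReal_ofReal (sub_nonneg.2 hp.2)]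
  · rw [Measure.dirac_apply' 0 measurableSet_Iic, indicator_of_notMem (mt mem_Iic.1 hy),
      mul_zero, zero_add, ENNReal.toReal_mul, ENNReal.toReal_ofReal (sub_nonneg.2 hp.2), zero_add]

theorem measure_setOf_cdf_le_of_zero_inflated {ν m : Measure ℝ} [IsProbabilityMeasure ν]
    [NullSingletonClass ν] [IsProbabilityMeasure m] (hν0 : ν (Iic 0) = 0) {p s : ℝ}
    (hp : p ∈ Ioo 0 1) (hs : s < 1)
    (hm : m = ENNReal.ofReal p • Measure.dirac 0 + ENNReal.ofReal (1 - p) • ν) :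
    m {y | cdf m y ≤ s} = if p ≤ s then ENNReal.ofReal s else 0 := by
  obtain ⟨hp0, hp1⟩ := hp
  have hνneg : ∀ y ≤ 0, cdf ν y = 0 := fun y hy => by
    rw [cdf_eq_real, measureReal_def, measure_mono_null (Iic_subset_Iic.2 hy) hν0,
      ENNReal.toReal_zero]
  have hcdf := cdf_zero_inflated ⟨hp0.le, hp1.le⟩ hm
  split_ifs with hps
  · set c := (s - p) / (1 - p)
    have h1p : 0 < 1 - p := sub_pos.2 hp1
    have hc1 : c < 1 := (div_lt_one h1p).2 (by linarith)
    have hc0 : 0 ≤ c := div_nonneg (sub_nonneg.2 hps) h1p.le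
    have hmem0 : (0 : ℝ) ∈ {y | cdf ν y ≤ c} := by
      rw [mem_ofPred_eq, hνneg 0 le_rfl]
      exact hc0
    have hset : {y | cdf m y ≤ s} = {y | cdf ν y ≤ c} := by
      ext y
      simp only [mem_ofPred_eq, hcdf y]
      split_ifs with hy
      · rw [le_div_iff₀ h1p]
        constructor <;> intro h <;> linarith
      · rw [hνneg y (not_le.1 hy).le]
        exact iff_of_true (by linarith) hc0
    rw [hset, hm]
    simp only [Measure.coe_add, Pi.add_apply, Measure.coe_smul, Pi.smul_apply, smul_eq_mul]
    rw [Measure.dirac_apply_of_mem hmem0, measure_setOf_cdf_le continuous_cdf hc1, mul_one,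
      ← ENNReal.ofReal_mul h1p.le, ← ENNReal.ofReal_add hp0.le (mul_nonneg h1p.le hc0),
      mul_div_cancel₀ _ h1p.ne', add_sub_cancel]
  · have hset : {y | cdf m y ≤ s} ⊆ Iio 0 := fun y hy => by
      by_contra hy0
      have hy' : cdf m y ≤ s := hy
      rw [hcdf y, if_pos (not_lt.1 hy0)] at hy'
      nlinarith [cdf_nonneg ν y]
    refine measure_mono_null hset ?_
    rw [hm]
    simp only [Measure.coe_add, Pi.add_apply, Measure.coe_smul, Pi.smul_apply, smul_eq_mul]
    rw [Measure.dirac_apply' 0 measurableSet_Iio, indicator_of_notMem self_notMem_Iio,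
      measure_mono_null Iio_subset_Iic_self hν0, mul_zero, mul_zero, add_zero]

theorem Kernel.measurable_cdf_apply {α : Type*} [MeasurableSpace α] (κ : Kernel α ℝ)
    [IsMarkovKernel κ] : Measurable fun q : α × ℝ => cdf (κ q.1) q.2 := by
  have hle : MeasurableSet {r : (α × ℝ) × ℝ | r.2 ≤ r.1.2} :=
    measurableSet_le measurable_snd measurable_fst.snd
  simp_rw [cdf_eq_real, measureReal_def]
  exact ENNReal.measurable_toReal.comp
    (Kernel.measurable_kernel_prodMk_left (κ := Kernel.prodMkRight ℝ κ) hle)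

section ZeroInflatedKernel

variable {α : Type*} [MeasurableSpace α] {μ : Measure α} {p₀ : α → ℝ}
  {ν : α → Measure ℝ} [∀ x, IsProbabilityMeasure (ν x)] [∀ x, NullSingletonClass (ν x)]
  {κ : Kernel α ℝ} [IsMarkovKernel κ]

theorem measure_compProd_setOf_cdf_le [SFinite μ] (hp₀ : Measurable p₀)
    (hp₀mem : ∀ x, p₀ x ∈ Ioo 0 1) (hν0 : ∀ x, ν x (Iic 0) = 0)
    (hκ : ∀ x, κ x = ENNReal.ofReal (p₀ x) • Measure.dirac 0
      + ENNReal.ofReal (1 - p₀ x) • ν x)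
    {s : ℝ} (hs : s < 1) :
    (μ ⊗ₘ κ) {q | cdf (κ q.1) q.2 ≤ s} = ENNReal.ofReal s * μ {x | p₀ x ≤ s} := by
  have hsection : ∀ x, κ x {y | cdf (κ x) y ≤ s}
      = {x | p₀ x ≤ s}.indicator (fun _ => ENNReal.ofReal s) x := fun x => by
    rw [measure_setOf_cdf_le_of_zero_inflated (hν0 x) (hp₀mem x) hs (hκ x), indicator_apply]
    rfl
  rw [Measure.compProd_apply
    (measurableSet_le (Kernel.measurable_cdf_apply κ) measurable_const)]
  exact (lintegral_congr hsection).trans (lintegral_indicator_const (hp₀ measurableSet_Iic) _)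

theorem cdf_map_compProd_cdf [IsProbabilityMeasure μ] (hp₀ : Measurable p₀)
    (hp₀mem : ∀ x, p₀ x ∈ Ioo 0 1) (hν0 : ∀ x, ν x (Iic 0) = 0)
    (hκ : ∀ x, κ x = ENNReal.ofReal (p₀ x) • Measure.dirac 0
      + ENNReal.ofReal (1 - p₀ x) • ν x) :
    ⇑(cdf ((μ ⊗ₘ κ).map fun q => cdf (κ q.1) q.2))
      = fun s => min s 1 * cdf (μ.map p₀) s := by
  have hU := Kernel.measurable_cdf_apply κ
  have : IsProbabilityMeasure ((μ ⊗ₘ κ).map fun q => cdf (κ q.1) q.2) :=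
    Measure.isProbabilityMeasure_map hU.aemeasurable
  have : IsProbabilityMeasure (μ.map p₀) := Measure.isProbabilityMeasure_map hp₀.aemeasurable
  funext s
  rw [cdf_eq_real, map_measureReal_apply hU measurableSet_Iic,
    cdf_eq_real, map_measureReal_apply hp₀ measurableSet_Iic]
  rcases lt_or_ge s 1 with hs | hs
  · have hpre : (fun q : α × ℝ => cdf (κ q.1) q.2) ⁻¹' Iic s
        = {q | cdf (κ q.1) q.2 ≤ s} := rfl
    rw [min_eq_left hs.le, measureReal_def, measureReal_def, hpre,
      measure_compProd_setOf_cdf_le hp₀ hp₀mem hν0 hκ hs, ENNReal.toReal_mul]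
    rcases le_or_gt 0 s with hs0 | hs0
    · rw [ENNReal.toReal_ofReal hs0]
      rfl
    · have hempty : p₀ ⁻¹' Iic s = ∅ :=
        eq_empty_of_forall_notMem fun x hx => (hs0.trans (hp₀mem x).1).not_ge hx
      rw [show {x | p₀ x ≤ s} = p₀ ⁻¹' Iic s from rfl, hempty, measure_empty]
      simp
  · have hU1 : (fun q : α × ℝ => cdf (κ q.1) q.2) ⁻¹' Iic s = univ :=
      eq_univ_of_forall fun q => (cdf_le_one _ _).trans hs
    have hp₀1 : p₀ ⁻¹' Iic s = univ :=
      eq_univ_of_forall fun x => (hp₀mem x).2.le.trans hs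
    rw [min_eq_right hs, hU1, hp₀1, probReal_univ, probReal_univ, one_mul]

end ZeroInflatedKernel

theorem strong_law_ae_of_map_eq {Ω E : Type*} [MeasurableSpace Ω] [MeasurableSpace E]
    {P : Measure Ω} {ρ : Measure E} {X : ℕ → Ω → E} (hX : ∀ i, Measurable (X i))
    (hindep : iIndepFun X P) (hident : ∀ i, P.map (X i) = ρ) {g : E → ℝ} (hg : Measurable g)
    (hint : Integrable g ρ) :
    ∀ᵐ ω ∂P, Tendsto (fun n : ℕ => (∑ i ∈ Finset.range n, g (X i ω)) / n) atTop
      (𝓝 (∫ x, g x ∂ρ)) := by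
  have hlaw : ∀ i, P.map (g ∘ X i) = ρ.map g := fun i => by
    rw [← Measure.map_map hg (hX i), hident i]
  have hmean : P[g ∘ X 0] = ∫ x, g x ∂ρ := by
    rw [← hident 0, integral_map (hX 0).aemeasurable hg.aestronglyMeasurable]
    rfl
  have hint0 : Integrable (g ∘ X 0) P :=
    (integrable_map_measure hg.aestronglyMeasurable (hX 0).aemeasurable).1 (hident 0 ▸ hint)
  have hslln := strong_law_ae_real (fun i => g ∘ X i) hint0
    (fun i j hij => (hindep.indepFun hij).comp hg hg)
    (fun i => ⟨(hg.comp (hX i)).aemeasurable, (hg.comp (hX 0)).aemeasurable, by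
      rw [hlaw, hlaw]⟩)
  rwa [hmean] at hslln

end ProbabilityTheory

theorem stmt16_general {d : ℕ} {Ω : Type*} [MeasurableSpace Ω] (P : Measure Ω)
    (μX : Measure (Fin d → ℝ)) [IsProbabilityMeasure μX]
    (p₀ : (Fin d → ℝ) → ℝ) (hp₀ : Measurable p₀)
    (hp₀mem : ∀ x, p₀ x ∈ Set.Ioo (0 : ℝ) 1)
    (ν : (Fin d → ℝ) → Measure ℝ) (hν : ∀ x, IsProbabilityMeasure (ν x))
    (hν0 : ∀ x, ν x (Set.Iic 0) = 0) (hνatom : ∀ x, NoAtoms (ν x))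
    (hp₀X : NoAtoms (μX.map p₀))
    (κ : Kernel (Fin d → ℝ) ℝ) [IsMarkovKernel κ]
    (hκ : ∀ x, κ x = ENNReal.ofReal (p₀ x) • Measure.dirac 0
        + ENNReal.ofReal (1 - p₀ x) • ν x)
    (F : ℝ → (Fin d → ℝ) → ℝ) (hF : ∀ y x, F y x = (κ x (Set.Iic y)).toReal)
    (XY : ℕ → Ω → (Fin d → ℝ) × ℝ) (hXYmeas : ∀ i, Measurable (XY i))
    (hindep : iIndepFun XY P)
    (hident : ∀ i, P.map (XY i) = μX ⊗ₘ κ)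
    (H : ℝ → ℝ) (hH : ∀ s ∈ Set.Icc (0 : ℝ) 1,
      H s = s * (μX {x | p₀ x ≤ s}).toReal) :
    ∀ f : BoundedContinuousFunction ℝ ℝ, ∀ᵐ ω ∂P,
      Tendsto (fun n : ℕ =>
          (1 / (n : ℝ)) * ∑ i ∈ Finset.range n, f (H (F ((XY i ω).2) ((XY i ω).1))))
        atTop (nhds (∫ u in (0 : ℝ)..1, f u)) := by
  intro f
  have : ∀ x, NullSingletonClass (ν x) := hνatom
  have : IsProbabilityMeasure (μX.map p₀) := Measure.isProbabilityMeasure_map hp₀.aemeasurable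
  have : NullSingletonClass (μX.map p₀) := hp₀X
  set U : (Fin d → ℝ) × ℝ → ℝ := fun q => cdf (κ q.1) q.2
  have hU : Measurable U := Kernel.measurable_cdf_apply κ
  set mU := (μX ⊗ₘ κ).map U
  have : IsProbabilityMeasure mU := Measure.isProbabilityMeasure_map hU.aemeasurable
  have hcdf : ⇑(cdf mU) = fun s => min s 1 * cdf (μX.map p₀) s :=
    cdf_map_compProd_cdf hp₀ hp₀mem hν0 hκ
  set err := cdf mU ∘ U
  have herr : Measurable err := (monotone_cdf mU).measurable.comp hU
  have hlaw : (μX ⊗ₘ κ).map err = volume.restrict (Icc 0 1) := by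
    rw [← Measure.map_map (monotone_cdf mU).measurable hU]
    exact map_cdf_eq_restrict_Icc (hcdf ▸ (continuous_id.min continuous_const).mul continuous_cdf)
  have hHF : ∀ q : (Fin d → ℝ) × ℝ, H (F q.2 q.1) = err q := fun q => by
    have hFU : F q.2 q.1 = U q := (hF _ _).trans (cdf_eq_real _ _).symm
    have hU01 : U q ∈ Icc 0 1 := ⟨cdf_nonneg _ _, cdf_le_one _ _⟩
    rw [hFU, hH _ hU01, show err q = cdf mU (U q) from rfl, hcdf]
    beta_reduce
    rw [min_eq_left hU01.2, cdf_eq_real, map_measureReal_apply hp₀ measurableSet_Iic]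
    rfl
  have hslln := strong_law_ae_of_map_eq (X := fun i => err ∘ XY i)
    (fun i => herr.comp (hXYmeas i)) (hindep.comp (fun _ => err) fun _ => herr)
    (fun i => by rw [← Measure.map_map herr (hXYmeas i), hident i, hlaw])
    f.continuous.measurable (f.integrable _)
  rw [integral_Icc_eq_integral_Ioc, ← intervalIntegral.integral_of_le zero_le_one] at hslln
  filter_upwards [hslln] with ω hω
  simpa [hHF, div_eq_inv_mul] using hω

/-- In the semicontinuous regression setup with each `ν_x` nonatomic and
the law of `p₀(X)` nonatomic, let `(X₁,Y₁), (X₂,Y₂), …` be i.i.d. with joint law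
`μ_X ⊗ κ`, and `H(s) = s·Pr(p₀(X) ≤ s)`.  Then for every bounded continuous
`f : ℝ → ℝ`, almost surely `(1/n)·Σ_{i=1}^n f(H(F(Y_i|X_i))) → ∫₀¹ f(u) du`:
the empirical distribution of the model errors converges weakly to the uniform
distribution on `[0,1]` almost surely. -/
theorem stmt16 {d : ℕ} {Ω : Type*} [MeasurableSpace Ω] (P : Measure Ω)
    [IsProbabilityMeasure P]
    (μX : Measure (Fin d → ℝ)) [IsProbabilityMeasure μX]
    (p₀ : (Fin d → ℝ) → ℝ) (hp₀ : Measurable p₀)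
    (hp₀mem : ∀ x, p₀ x ∈ Set.Ioo (0 : ℝ) 1)
    (ν : (Fin d → ℝ) → Measure ℝ) (hν : ∀ x, IsProbabilityMeasure (ν x))
    (hν0 : ∀ x, ν x (Set.Iic 0) = 0) (hνatom : ∀ x, NoAtoms (ν x))
    (hp₀X : NoAtoms (μX.map p₀))
    (κ : Kernel (Fin d → ℝ) ℝ) [IsMarkovKernel κ]
    (hκ : ∀ x, κ x = ENNReal.ofReal (p₀ x) • Measure.dirac 0
        + ENNReal.ofReal (1 - p₀ x) • ν x)
    (F : ℝ → (Fin d → ℝ) → ℝ) (hF : ∀ y x, F y x = (κ x (Set.Iic y)).toReal)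
    (XY : ℕ → Ω → (Fin d → ℝ) × ℝ) (hXYmeas : ∀ i, Measurable (XY i))
    (hindep : iIndepFun XY P)
    (hident : ∀ i, P.map (XY i) = μX ⊗ₘ κ)
    (H : ℝ → ℝ) (hH : ∀ s ∈ Set.Icc (0 : ℝ) 1,
      H s = s * (μX {x | p₀ x ≤ s}).toReal) :
    ∀ f : BoundedContinuousFunction ℝ ℝ, ∀ᵐ ω ∂P,
      Tendsto (fun n : ℕ =>
          (1 / (n : ℝ)) * ∑ i ∈ Finset.range n, f (H (F ((XY i ω).2) ((XY i ω).1))))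
        atTop (nhds (∫ u in (0 : ℝ)..1, f u)) :=
  stmt16_general P μX p₀ hp₀ hp₀mem ν hν hν0 hνatom hp₀X κ hκ F hF XY hXYmeas hindep hident H hH
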